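/- If K₀ ≺ K₁, i.e. there is a Lagrangian concordance from the Legendrian knot K₀ to the Legendrian knot K₁ in the symplectisation of (ℝ³, dz − y dx), then their rotation numbers agree: r(K₀) = r(K₁). -/

import Mathlib

/-!
In the complex coordinates `(dx + i dy, dt + i α)` on `T(ℝ³ × ℝ)` the form `ω` is `eᵗ` times the
imaginary part of the Hermitian form of `ℂ²`, so a real basis of a Lagrangian plane is a complex
basis of `ℂ²`: the complex determinant `D(s, t)` of the frame `(∂ₛC, ∂ₜC)` of a Lagrangian
concordance never vanishes. The winding number of the loop `s ↦ D(s, t)` is an integer depending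
continuously on `t`, hence constant, and on the cylindrical ends `D(s, t) = x'(s) + i y'(s)`, whose
winding number is the rotation number of the knot.
-/

open Real Set

noncomputable section

abbrev R3 : Type := ℝ × ℝ × ℝ
abbrev R4 : Type := R3 × ℝ

/-- The symplectisation form `ω = d(e^t α)` on `ℝ³ × ℝ` (coordinates ((x,y,z),t)),
where `α = dz - y dx`, evaluated at the point `p` on tangent vectors `u`, `v`:
`ω = e^t((u₄v₃ - u₃v₄) - y(u₄v₁ - u₁v₄) + (u₁v₂ - u₂v₁))`. -/
def omegaSym (p u v : R4) : ℝ :=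
  Real.exp p.2 *
    ((u.2 * v.1.2.2 - u.1.2.2 * v.2)
      - p.1.2.1 * (u.2 * v.1.1 - u.1.1 * v.2)
      + (u.1.1 * v.1.2.1 - u.1.2.1 * v.1.1))

/-- partial derivative of a parametrized cylinder in the circle variable -/
def pd1 (C : ℝ → ℝ → R4) (s t : ℝ) : R4 := deriv (fun u => C u t) s

/-- partial derivative of a parametrized cylinder in the ℝ variable -/
def pd2 (C : ℝ → ℝ → R4) (s t : ℝ) : R4 := deriv (fun u => C s u) t

/-- A Legendrian knot in `(ℝ³, dz - y dx)`: a smooth embedding `γ` of `ℝ/2πℤ`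
(modelled by a 2π-periodic map which is injective modulo the period and is an
immersion) satisfying `z'(s) = y(s) x'(s)` for all `s`. -/
structure IsLegendrianKnot (γ : ℝ → R3) : Prop where
  smooth : ContDiff ℝ (⊤ : ℕ∞) γ
  periodic : Function.Periodic γ (2 * π)
  inj : ∀ s₁ s₂ : ℝ, γ s₁ = γ s₂ → ∃ n : ℤ, s₂ = s₁ + n * (2 * π)
  immersed : ∀ s, deriv γ s ≠ 0
  legendrian : ∀ s,
    deriv (fun u => (γ u).2.2) s = (γ s).2.1 * deriv (fun u => (γ u).1) s

/-- The image of the parametrized cylinder `C` is Lagrangian for `ω`: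
`ω` restricts to zero on all of its tangent planes (which are spanned by the two
partial derivatives of `C`). -/
def IsLagrangianCyl (C : ℝ → ℝ → R4) : Prop :=
  ∀ s t, omegaSym (C s t) (pd1 C s t) (pd2 C s t) = 0

/-- A Lagrangian concordance from `K₀` to `K₁`: a smooth proper embedding of the
cylinder `(ℝ/2πℤ) × ℝ` into `ℝ³ × ℝ` with Lagrangian image, equal to the trivial
cylinder over `K₀` (resp. `K₁`) for `t ≤ -T` (resp. `t ≥ T`). -/
structure IsLagConcordance (K₀ K₁ : ℝ → R3) (C : ℝ → ℝ → R4) : Prop where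
  smooth : ContDiff ℝ (⊤ : ℕ∞) (fun p : ℝ × ℝ => C p.1 p.2)
  periodic : ∀ s t, C (s + 2 * π) t = C s t
  inj : ∀ s₁ t₁ s₂ t₂, C s₁ t₁ = C s₂ t₂ → t₁ = t₂ ∧ ∃ n : ℤ, s₂ = s₁ + n * (2 * π)
  immersed : ∀ s t, LinearIndependent ℝ ![pd1 C s t, pd2 C s t]
  lagrangian : IsLagrangianCyl C
  ends : ∃ T > 0, (∀ s t, t ≤ -T → C s t = (K₀ s, t)) ∧
    (∀ s t, T ≤ t → C s t = (K₁ s, t))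

/-- The Lagrangian concordance relation `K₀ ≺ K₁`. -/
def Prec (K₀ K₁ : ℝ → R3) : Prop := ∃ C, IsLagConcordance K₀ K₁ C
/-- The rotation number of a Legendrian knot: the winding number of the derivative
of its Lagrangian projection `s ↦ (x(s), y(s))`. -/
def rot (γ : ℝ → R3) : ℝ :=
  (1 / (2 * π)) * ∫ s in (0:ℝ)..(2 * π),
    (deriv (fun u => (γ u).1) s * deriv (deriv fun u => (γ u).2.1) s -
      deriv (fun u => (γ u).2.1) s * deriv (deriv fun u => (γ u).1) s) /
    ((deriv (fun u => (γ u).1) s) ^ 2 + (deriv (fun u => (γ u).2.1) s) ^ 2)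

open Complex ComplexConjugate Filter Topology

@[fun_prop]
theorem Complex.contDiff_ofReal {n : WithTop ℕ∞} : ContDiff ℝ n ((↑) : ℝ → ℂ) :=
  ofRealCLM.contDiff

theorem hasDerivAt_comp_prodMk_left {E : Type*} [NormedAddCommGroup E] [NormedSpace ℝ E]
    {f : ℝ × ℝ → E} {s t : ℝ} (hf : DifferentiableAt ℝ f (s, t)) :
    HasDerivAt (fun u => f (u, t)) (fderiv ℝ f (s, t) (1, 0)) s :=
  hf.hasFDerivAt.comp_hasDerivAt s ((hasDerivAt_id s).prodMk (hasDerivAt_const s t))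

theorem hasDerivAt_comp_prodMk_right {E : Type*} [NormedAddCommGroup E] [NormedSpace ℝ E]
    {f : ℝ × ℝ → E} {s t : ℝ} (hf : DifferentiableAt ℝ f (s, t)) :
    HasDerivAt (fun u => f (s, u)) (fderiv ℝ f (s, t) (0, 1)) t :=
  hf.hasFDerivAt.comp_hasDerivAt t ((hasDerivAt_const t s).prodMk (hasDerivAt_id t))

theorem exists_integral_deriv_div_eq_int_mul {D : ℝ → ℂ} (hD : Differentiable ℝ D)
    (hD' : Continuous (deriv D)) (hne : ∀ s, D s ≠ 0) {a b : ℝ} (hab : D a = D b) :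
    ∃ n : ℤ, ∫ s in a..b, deriv D s / D s = n * (2 * π * I) := by
  set g : ℝ → ℂ := fun x => ∫ s in a..x, deriv D s / D s
  have hg : ∀ x, HasDerivAt g (deriv D x / D x) x := fun x =>
    ((hD'.div hD.continuous hne).integral_hasStrictDerivAt a x).hasDerivAt
  -- `D · exp (-g)` is constant, so `exp (g b) = D b / D a = 1`.
  have hconst : ∀ x, HasDerivAt (fun x => D x * exp (-g x)) 0 x := fun x => by
    refine ((hD x).hasDerivAt.mul (hg x).neg.cexp).congr_deriv ?_
    field_simp [hne x]
    ring
  have hgb := is_const_of_deriv_eq_zero (fun x => (hconst x).differentiableAt)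
    (fun x => (hconst x).deriv) b a
  simp only [g, intervalIntegral.integral_same, neg_zero, Complex.exp_zero, mul_one, ← hab] at hgb
  obtain ⟨n, hn⟩ := exp_eq_one_iff.mp ((mul_eq_left₀ (hne a)).mp hgb)
  exact ⟨-n, by push_cast; linear_combination -hn⟩

def windingIntegral (D : ℝ → ℂ) : ℝ := ∫ s in (0 : ℝ)..2 * π, (deriv D s / D s).im

theorem windingIntegral_mem_zmultiples {D : ℝ → ℂ} (hD : Differentiable ℝ D)
    (hD' : Continuous (deriv D)) (hne : ∀ s, D s ≠ 0) (hper : D 0 = D (2 * π)) :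
    windingIntegral D ∈ AddSubgroup.zmultiples (2 * π) := by
  obtain ⟨n, hn⟩ := exists_integral_deriv_div_eq_int_mul hD hD' hne hper
  have him : windingIntegral D = (∫ s in (0 : ℝ)..2 * π, deriv D s / D s).im :=
    Complex.imCLM.intervalIntegral_comp_comm
      ((hD'.div hD.continuous hne).intervalIntegrable (μ := MeasureTheory.volume) 0 (2 * π))
  exact ⟨n, by simp [him, hn]⟩

theorem windingIntegral_eq_of_contDiff {D : ℝ × ℝ → ℂ} (hD : ContDiff ℝ 1 D) (hne : ∀ p, D p ≠ 0)
    (hper : ∀ t, D (0, t) = D (2 * π, t)) (a b : ℝ) :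
    windingIntegral (fun s => D (s, a)) = windingIntegral (fun s => D (s, b)) := by
  have hDd : Differentiable ℝ D := hD.differentiable one_ne_zero
  have hderiv : ∀ t, deriv (fun s => D (s, t)) = fun s => fderiv ℝ D (s, t) (1, 0) := fun t =>
    funext fun s => (hasDerivAt_comp_prodMk_left (hDd _)).deriv
  have hcont : Continuous fun p : ℝ × ℝ => fderiv ℝ D p (1, 0) :=
    (hD.continuous_fderiv one_ne_zero).clm_apply continuous_const
  have hdisc : IsDiscrete (AddSubgroup.zmultiples (2 * π) : Set ℝ) :=
    isDiscrete_iff_discreteTopology.mpr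
      (inferInstance : DiscreteTopology (AddSubgroup.zmultiples (2 * π)))
  refine isPreconnected_univ.constant_of_mapsTo (f := fun t => windingIntegral fun s => D (s, t))
    hdisc ?_ (fun t _ => ?_) trivial trivial
  · simp only [windingIntegral, hderiv]
    refine (intervalIntegral.continuous_parametric_intervalIntegral_of_continuous' ?_ _ _)
      |>.continuousOn
    exact (continuous_im.comp (hcont.div hD.continuous hne)).comp continuous_swap
  · refine windingIntegral_mem_zmultiples
      (fun s => (hasDerivAt_comp_prodMk_left (hDd _)).differentiableAt) ?_ (fun s => hne _) (hper t)
    rw [hderiv]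
    fun_prop

/-- Complex coordinates `(dx + i dy, dt + i α)` on the tangent space of `ℝ³ × ℝ` at a point with
`y`-coordinate `y`; in them `ω` is `eᵗ` times the imaginary part of the Hermitian form of `ℂ²`. -/
def cplxCoords (y : ℝ) : R4 →ₗ[ℝ] ℂ × ℂ where
  toFun u := (u.1.1 + u.1.2.1 * I, u.2 + (u.1.2.2 - y * u.1.1 : ℝ) * I)
  map_add' u v := by ext <;> simp <;> ring
  map_smul' c u := by ext <;> simp <;> ring

theorem cplxCoords_apply (y : ℝ) (u : R4) :
    cplxCoords y u = (u.1.1 + u.1.2.1 * I, u.2 + (u.1.2.2 - y * u.1.1 : ℝ) * I) := rfl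

theorem ker_cplxCoords (y : ℝ) : LinearMap.ker (cplxCoords y) = ⊥ := by
  refine LinearMap.ker_eq_bot'.mpr fun u hu => ?_
  obtain ⟨h₁, h₂⟩ := Prod.ext_iff.mp hu
  have hx : u.1.1 = 0 := by simpa [cplxCoords_apply] using congrArg re h₁
  have hy : u.1.2.1 = 0 := by simpa [cplxCoords_apply] using congrArg im h₁
  have ht : u.2 = 0 := by simpa [cplxCoords_apply] using congrArg re h₂
  have hz : u.1.2.2 = 0 := by simpa [cplxCoords_apply, hx] using congrArg im h₂
  exact Prod.ext (Prod.ext hx (Prod.ext hy hz)) ht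

theorem omegaSym_eq (p u v : R4) :
    omegaSym p u v = Real.exp p.2 *
      (conj (cplxCoords p.1.2.1 u).1 * (cplxCoords p.1.2.1 v).1 +
        conj (cplxCoords p.1.2.1 u).2 * (cplxCoords p.1.2.1 v).2).im := by
  simp only [omegaSym, cplxCoords_apply, add_im, mul_im, conj_re, conj_im, add_re, ofReal_re,
    ofReal_im, mul_re, I_re, I_im]
  ring

def cdet (v w : ℂ × ℂ) : ℂ := v.1 * w.2 - v.2 * w.1

theorem cdet_ne_zero_of_linearIndependent {v w : ℂ × ℂ} (hind : LinearIndependent ℝ ![v, w])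
    (hherm : (conj v.1 * w.1 + conj v.2 * w.2).im = 0) : cdet v w ≠ 0 := by
  rw [cdet]
  intro hdet
  have hv : v ≠ 0 := hind.ne_zero 0
  set h := conj v.1 * w.1 + conj v.2 * w.2
  set N := normSq v.1 + normSq v.2
  have hN : (N : ℂ) ≠ 0 := by
    refine ofReal_ne_zero.mpr fun hN => hv (Prod.ext ?_ ?_) <;>
      refine normSq_eq_zero.mp ?_ <;> linarith [normSq_nonneg v.1, normSq_nonneg v.2]
  have hh : ((h.re : ℝ) : ℂ) = h := Complex.ext rfl (by simp [hherm])
  have h₁ : h * v.1 = N * w.1 := by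
    simp only [h, N]
    push_cast [normSq_eq_conj_mul_self]
    linear_combination (conj v.2) * hdet
  have h₂ : h * v.2 = N * w.2 := by
    simp only [h, N]
    push_cast [normSq_eq_conj_mul_self]
    linear_combination -(conj v.1) * hdet
  refine (LinearIndependent.pair_iff' hv).mp hind (h.re / N) ?_
  ext1 <;> simp only [Prod.smul_fst, Prod.smul_snd, Complex.real_smul] <;> push_cast <;> rw [hh] <;>
    field_simp
  exacts [h₁, h₂]

def cylDet (C : ℝ → ℝ → R4) (p : ℝ × ℝ) : ℂ :=
  cdet (cplxCoords (C p.1 p.2).1.2.1 (pd1 C p.1 p.2))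
    (cplxCoords (C p.1 p.2).1.2.1 (pd2 C p.1 p.2))

theorem cylDet_ne_zero {C : ℝ → ℝ → R4} (hlag : IsLagrangianCyl C) {s t : ℝ}
    (himm : LinearIndependent ℝ ![pd1 C s t, pd2 C s t]) : cylDet C (s, t) ≠ 0 := by
  refine cdet_ne_zero_of_linearIndependent ?_ ?_
  · have hcomp : cplxCoords (C s t).1.2.1 ∘ ![pd1 C s t, pd2 C s t] =
        ![cplxCoords (C s t).1.2.1 (pd1 C s t), cplxCoords (C s t).1.2.1 (pd2 C s t)] := by
      funext i
      fin_cases i <;> rfl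
    simpa only [hcomp] using himm.map' _ (ker_cplxCoords (C s t).1.2.1)
  · simpa [omegaSym_eq, Real.exp_ne_zero] using hlag s t

theorem cylDet_periodic {C : ℝ → ℝ → R4} (hper : ∀ s t, C (s + 2 * π) t = C s t) (t : ℝ) :
    cylDet C (0, t) = cylDet C (2 * π, t) := by
  have h1 : pd1 C (2 * π) t = pd1 C 0 t := by
    simpa [pd1, hper] using (deriv_comp_add_const (fun u => C u t) (2 * π) 0).symm
  have h2 : pd2 C (2 * π) t = pd2 C 0 t := by
    simpa [pd2] using congrArg (fun f => deriv f t) (funext fun u => hper 0 u)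
  simp [cylDet, h1, h2, ← hper 0 t]

theorem contDiff_cylDet {C : ℝ → ℝ → R4} {n : WithTop ℕ∞}
    (hC : ContDiff ℝ (n + 1) fun p : ℝ × ℝ => C p.1 p.2) : ContDiff ℝ n (cylDet C) := by
  set Ch := fun p : ℝ × ℝ => C p.1 p.2
  have hCd : Differentiable ℝ Ch := hC.differentiable (by simp)
  have hfd : ContDiff ℝ n (fderiv ℝ Ch) := hC.fderiv_right le_rfl
  have h1 : ContDiff ℝ n fun p => fderiv ℝ Ch p (1, 0) := hfd.clm_apply contDiff_const
  have h2 : ContDiff ℝ n fun p => fderiv ℝ Ch p (0, 1) := hfd.clm_apply contDiff_const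
  have hC' : ContDiff ℝ n Ch := hC.of_le le_self_add
  have hcylDet : cylDet C = fun p => cdet (cplxCoords (Ch p).1.2.1 (fderiv ℝ Ch p (1, 0)))
      (cplxCoords (Ch p).1.2.1 (fderiv ℝ Ch p (0, 1))) := by
    ext1 p
    rw [cylDet, pd1, pd2, (hasDerivAt_comp_prodMk_left (hCd p)).deriv,
      (hasDerivAt_comp_prodMk_right (hCd p)).deriv]
  rw [hcylDet]
  simp only [cdet, cplxCoords_apply]
  fun_prop

def lagProjDeriv (γ : ℝ → R3) (s : ℝ) : ℂ :=
  deriv (fun u => (γ u).1) s + deriv (fun u => (γ u).2.1) s * I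

theorem cylDet_eq_lagProjDeriv {C : ℝ → ℝ → R4} {γ : ℝ → R3} (hγ : Differentiable ℝ γ) {t : ℝ}
    (hloc : ∀ s, (fun u => C s u) =ᶠ[𝓝 t] fun u => (γ s, u)) (s : ℝ) :
    cylDet C (s, t) = lagProjDeriv γ s := by
  have hx : Differentiable ℝ fun u => (γ u).1 := hγ.fst
  have hy : Differentiable ℝ fun u => (γ u).2.1 := hγ.snd.fst
  have hz : Differentiable ℝ fun u => (γ u).2.2 := hγ.snd.snd
  have h1 : pd1 C s t = ((deriv (fun u => (γ u).1) s, deriv (fun u => (γ u).2.1) s,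
      deriv (fun u => (γ u).2.2) s), 0) := by
    rw [pd1, funext fun u => (hloc u).self_of_nhds]
    exact (((hx s).hasDerivAt.prodMk ((hy s).hasDerivAt.prodMk (hz s).hasDerivAt)).prodMk
      (hasDerivAt_const s t)).deriv
  have h2 : pd2 C s t = (0, 1) := by
    rw [pd2, (hloc s).deriv_eq]
    exact ((hasDerivAt_const t (γ s)).prodMk (hasDerivAt_id t)).deriv
  simp [cylDet, cdet, lagProjDeriv, cplxCoords_apply, h1, h2]

theorem rot_eq_windingIntegral {γ : ℝ → R3} (hγ : ContDiff ℝ 2 γ) :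
    rot γ = windingIntegral (lagProjDeriv γ) / (2 * π) := by
  have hx : ContDiff ℝ (1 + 1) fun u => (γ u).1 := hγ.fst
  have hy : ContDiff ℝ (1 + 1) fun u => (γ u).2.1 := hγ.snd.fst
  have hx' := ((contDiff_succ_iff_deriv.mp hx).2.2.differentiable one_ne_zero)
  have hy' := ((contDiff_succ_iff_deriv.mp hy).2.2.differentiable one_ne_zero)
  have hderiv : ∀ s, deriv (lagProjDeriv γ) s =
      deriv (deriv fun u => (γ u).1) s + deriv (deriv fun u => (γ u).2.1) s * I := fun s =>
    ((hx' s).hasDerivAt.ofReal_comp.add ((hy' s).hasDerivAt.ofReal_comp.mul_const I)).deriv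
  rw [rot, windingIntegral, one_div, inv_mul_eq_div]
  congr 1
  refine intervalIntegral.integral_congr fun s _ => ?_
  simp only [hderiv, lagProjDeriv, div_im, normSq_add_mul_I, add_im, add_re, mul_im, mul_re,
    ofReal_re, ofReal_im, I_re, I_im]
  ring

/-- the rotation number is invariant under Lagrangian concordance. -/
theorem stmt4 (K₀ K₁ : ℝ → R3) (h₀ : IsLegendrianKnot K₀) (h₁ : IsLegendrianKnot K₁)
    (h : Prec K₀ K₁) : rot K₀ = rot K₁ := by
  obtain ⟨C, hC⟩ := h
  obtain ⟨T, -, hC₀, hC₁⟩ := hC.ends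
  have hD : ContDiff ℝ 1 (cylDet C) :=
    contDiff_cylDet (hC.smooth.of_le (WithTop.coe_le_coe.mpr le_top))
  have e₀ : (fun s => cylDet C (s, -(T + 1))) = lagProjDeriv K₀ :=
    funext <| cylDet_eq_lagProjDeriv (h₀.smooth.differentiable (by simp)) fun s =>
      eventually_le_nhds (by linarith) |>.mono fun u hu => hC₀ s u hu
  have e₁ : (fun s => cylDet C (s, T + 1)) = lagProjDeriv K₁ :=
    funext <| cylDet_eq_lagProjDeriv (h₁.smooth.differentiable (by simp)) fun s =>
      eventually_ge_nhds (by linarith) |>.mono fun u hu => hC₁ s u hu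
  rw [rot_eq_windingIntegral (h₀.smooth.of_le (WithTop.coe_le_coe.mpr le_top)),
    rot_eq_windingIntegral (h₁.smooth.of_le (WithTop.coe_le_coe.mpr le_top)), ← e₀, ← e₁,
    windingIntegral_eq_of_contDiff hD (fun p => cylDet_ne_zero hC.lagrangian (hC.immersed _ _))
      (cylDet_periodic hC.periodic)]
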